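/- With the DPnP kernel definitions, the distribution π_η(x) = p⋆(x) q̃_η(x) / ∫ p⋆ q̃_η is a well-defined probability density (the normalizing integral is finite and positive), and K_DPnP is reversible with respect to π_η: for all x, x' ∈ ℝ^d, π_η(x) K_DPnP(x, x') = π_η(x') K_DPnP(x', x). Consequently π_η is a stationary distribution of K_DPnP: ∫ π_η(x) K_DPnP(x, x') dx = π_η(x') for every x'. -/

import Mathlib

open MeasureTheory

/-- `q̃_η(x) = ∫ e^{L(x')} e^{−‖x−x'‖²/(2η²)} dx'`. -/
noncomputable def qEta {d : ℕ} (L : EuclideanSpace ℝ (Fin d) → ℝ) (η : ℝ)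
    (x : EuclideanSpace ℝ (Fin d)) : ℝ :=
  ∫ x', Real.exp (L x') * Real.exp (-‖x - x'‖ ^ 2 / (2 * η ^ 2))

/-- `p̃_η(x) = ∫ p⋆(x') e^{−‖x−x'‖²/(2η²)} dx'`. -/
noncomputable def pEta {d : ℕ} (p : EuclideanSpace ℝ (Fin d) → ℝ) (η : ℝ)
    (x : EuclideanSpace ℝ (Fin d)) : ℝ :=
  ∫ x', p x' * Real.exp (-‖x - x'‖ ^ 2 / (2 * η ^ 2))

/-- The proximal consistency sampler kernel
`K_PCS(x, x') = e^{L(x') − ‖x'−x‖²/(2η²)} / q̃_η(x)`. -/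
noncomputable def KPCS {d : ℕ} (L : EuclideanSpace ℝ (Fin d) → ℝ) (η : ℝ)
    (x x' : EuclideanSpace ℝ (Fin d)) : ℝ :=
  Real.exp (L x' - ‖x' - x‖ ^ 2 / (2 * η ^ 2)) / qEta L η x

/-- The denoising diffusion sampler kernel
`K_DDS(x, x') = p⋆(x') e^{−‖x'−x‖²/(2η²)} / p̃_η(x)`. -/
noncomputable def KDDS {d : ℕ} (p : EuclideanSpace ℝ (Fin d) → ℝ) (η : ℝ)
    (x x' : EuclideanSpace ℝ (Fin d)) : ℝ :=
  p x' * Real.exp (-‖x' - x‖ ^ 2 / (2 * η ^ 2)) / pEta p η x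

/-- The composite DPnP kernel `K_DPnP(x, x') = ∫ K_PCS(x, z) K_DDS(z, x') dz`. -/
noncomputable def KDPnP {d : ℕ} (p L : EuclideanSpace ℝ (Fin d) → ℝ) (η : ℝ)
    (x x' : EuclideanSpace ℝ (Fin d)) : ℝ :=
  ∫ z, KPCS L η x z * KDDS p η z x'

/-- Action of a Markov transition density on a probability density:
`(p ∘ K)(x') = ∫ p(x) K(x, x') dx`. -/
noncomputable def applyKernel {d : ℕ} (K : EuclideanSpace ℝ (Fin d) → EuclideanSpace ℝ (Fin d) → ℝ)
    (p : EuclideanSpace ℝ (Fin d) → ℝ) : EuclideanSpace ℝ (Fin d) → ℝ :=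
  fun x' => ∫ x, p x * K x x'

/-- Total variation distance between two densities: `TV(p, q) = ∫ |p(x) − q(x)| dx`. -/
noncomputable def tvDist {d : ℕ} (p q : EuclideanSpace ℝ (Fin d) → ℝ) : ℝ :=
  ∫ x, |p x - q x|

/-- Chi-squared divergence: `χ²(p ‖ q) = ∫ (p(x) − q(x))² / q(x) dx`. -/
noncomputable def chiSq {d : ℕ} (p q : EuclideanSpace ℝ (Fin d) → ℝ) : ℝ :=
  ∫ x, (p x - q x) ^ 2 / q x

/-- The stationary density `π_η(x) = p⋆(x) q̃_η(x) / ∫ p⋆ q̃_η`. -/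
noncomputable def piEta {d : ℕ} (p L : EuclideanSpace ℝ (Fin d) → ℝ) (η : ℝ)
    (x : EuclideanSpace ℝ (Fin d)) : ℝ :=
  p x * qEta L η x / ∫ y, p y * qEta L η y

/-!
The joint density `p⋆(x) e^{L(z)} e^{−‖x−z‖²/(2η²)}` of a pair `(x, z)` has `x`-marginal
`p⋆ q̃_η`, and `K_PCS(x, ·)`, `K_DDS(z, ·)` are its two conditional densities. Hence, up to the
constant `∫ p⋆ q̃_η`, `π_η(x) K_DPnP(x, x')` is the integral over `z` of
`p⋆(x) p⋆(x') e^{L(z)} e^{−‖x−z‖²/(2η²)} e^{−‖z−x'‖²/(2η²)} / p̃_η(z)`, which is symmetric in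
`x` and `x'`. This detailed balance gives stationarity because `K_DPnP(x', ·)` integrates to one
(Fubini). The normalizing constant is finite since `q̃_η ≤ e^{sup L} ∫ e^{−‖z‖²/(2η²)} dz`.
-/

open Real

namespace DPnP

section Markov

variable {α β : Type*} [MeasurableSpace α] [MeasurableSpace β] {μ : Measure α} {ν : Measure β}

theorem integral_mul_pos_of_pos {f g : α → ℝ} (hf0 : 0 ≤ f) (hf : Integrable f μ)
    (hf_pos : 0 < ∫ x, f x ∂μ) (hg : ∀ x, 0 < g x) (hfg : Integrable (fun x => f x * g x) μ) :
    0 < ∫ x, f x * g x ∂μ := by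
  have hsupp : Function.support (fun x => f x * g x) = Function.support f := by
    ext x
    simp [(hg x).ne']
  rw [integral_pos_iff_support_of_nonneg (fun x => mul_nonneg (hf0 x) (hg x).le) hfg, hsupp,
    ← integral_pos_iff_support_of_nonneg hf0 hf]
  exact hf_pos

theorem integral_integral_mul_eq_integral [SFinite μ] [SFinite ν] {k : α → ℝ} {K : α → β → ℝ}
    (hk : Integrable k μ) (hK : AEStronglyMeasurable (Function.uncurry K) (μ.prod ν))
    (hK0 : ∀ z y, 0 ≤ K z y) (hKi : ∀ z, Integrable (K z) ν) (hK1 : ∀ z, ∫ y, K z y ∂ν = 1) :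
    ∫ y, ∫ z, k z * K z y ∂μ ∂ν = ∫ z, k z ∂μ := by
  have hmeas : AEStronglyMeasurable (Function.uncurry fun z y => k z * K z y) (μ.prod ν) :=
    hk.aestronglyMeasurable.comp_fst.mul hK
  have hint : Integrable (Function.uncurry fun z y => k z * K z y) (μ.prod ν) := by
    rw [integrable_prod_iff hmeas]
    refine ⟨.of_forall fun z => (hKi z).const_mul (k z), ?_⟩
    simpa [norm_mul, integral_const_mul, Real.norm_of_nonneg (hK0 _ _), hK1] using hk.norm
  rw [← integral_integral_swap hint]
  simp [integral_const_mul, hK1]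

theorem integral_mul_eq_of_detailed_balance {ρ : α → ℝ} {K : α → α → ℝ}
    (hrev : ∀ x y, ρ x * K x y = ρ y * K y x) (y : α) (hK1 : ∫ x, K y x ∂μ = 1) :
    ∫ x, ρ x * K x y ∂μ = ρ y := by
  simp_rw [hrev _ y, integral_const_mul, hK1, mul_one]

end Markov

section Gaussian

variable {V : Type*} [NormedAddCommGroup V] {η : ℝ}

noncomputable def gaussKernel (η : ℝ) (x z : V) : ℝ := rexp (-‖x - z‖ ^ 2 / (2 * η ^ 2))

theorem gaussKernel_pos (x z : V) : 0 < gaussKernel η x z := exp_pos _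

theorem gaussKernel_le_one (x z : V) : gaussKernel η x z ≤ 1 :=
  exp_le_one_iff.2 (div_nonpos_of_nonpos_of_nonneg (by simp) (by positivity))

theorem gaussKernel_comm (x z : V) : gaussKernel η x z = gaussKernel η z x := by
  rw [gaussKernel, norm_sub_rev, gaussKernel]

variable [InnerProductSpace ℝ V] [FiniteDimensional ℝ V] [MeasurableSpace V] [BorelSpace V]

theorem measurable_gaussKernel : Measurable (Function.uncurry (gaussKernel (V := V) η)) := by
  unfold gaussKernel
  fun_prop

theorem integral_gaussKernel_pos (hη : 0 < η) : 0 < ∫ z, gaussKernel η (0 : V) z := by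
  have h := GaussianFourier.integral_rexp_neg_mul_sq_norm (V := V) (b := 1 / (2 * η ^ 2))
    (by positivity)
  have hfun : (fun z : V => gaussKernel η 0 z) = fun v => rexp (-(1 / (2 * η ^ 2)) * ‖v‖ ^ 2) := by
    ext v
    rw [gaussKernel, zero_sub, norm_neg]
    ring_nf
  rw [hfun, h]
  positivity

theorem integrable_gaussKernel (hη : 0 < η) (x : V) : Integrable (gaussKernel η x) := by
  have h0 : Integrable (gaussKernel η (0 : V)) :=
    .of_integral_ne_zero (integral_gaussKernel_pos hη).ne'
  refine (h0.comp_sub_right x).congr (.of_forall fun z => ?_)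
  simp [gaussKernel]

theorem integral_gaussKernel_eq (x : V) :
    ∫ z, gaussKernel η x z = ∫ z, gaussKernel η (0 : V) z := by
  simpa [gaussKernel, norm_sub_rev] using integral_sub_right_eq_self (gaussKernel η (0 : V)) x

theorem measurable_integral_mul_gaussKernel {w : V → ℝ} (hw : Measurable w) :
    Measurable fun x => ∫ z, w z * gaussKernel η x z :=
  (StronglyMeasurable.integral_prod_right'
    (f := fun q : V × V => w q.2 * gaussKernel η q.1 q.2)
    ((hw.comp measurable_snd).mul measurable_gaussKernel).stronglyMeasurable).measurable

theorem integrable_mul_gaussKernel {w : V → ℝ} (hw : Integrable w) (x : V) :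
    Integrable (fun z => w z * gaussKernel η x z) :=
  hw.mul_bdd (c := 1) measurable_gaussKernel.of_uncurry_left.aestronglyMeasurable
    (.of_forall fun z => by
      simpa [abs_of_pos (gaussKernel_pos x z)] using gaussKernel_le_one x z)

theorem integrable_mul_gaussKernel_of_bounded {w : V → ℝ} {B : ℝ} (hw : AEStronglyMeasurable w)
    (hB : ∀ z, ‖w z‖ ≤ B) (hη : 0 < η) (x : V) :
    Integrable (fun z => w z * gaussKernel η x z) :=
  (integrable_gaussKernel hη x).bdd_mul hw (.of_forall hB)

end Gaussian

section DPnPKernels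

variable {d : ℕ} {p L : EuclideanSpace ℝ (Fin d) → ℝ} {η M : ℝ}

theorem qEta_eq (x : EuclideanSpace ℝ (Fin d)) :
    qEta L η x = ∫ z, rexp (L z) * gaussKernel η x z := rfl

theorem KPCS_eq (x z : EuclideanSpace ℝ (Fin d)) :
    KPCS L η x z = rexp (L z) * gaussKernel η x z / qEta L η x := by
  rw [KPCS, gaussKernel, ← exp_add, norm_sub_rev, neg_div, ← sub_eq_add_neg]

theorem KDDS_eq (z x : EuclideanSpace ℝ (Fin d)) :
    KDDS p η z x = p x * gaussKernel η z x / pEta p η z := by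
  rw [KDDS, gaussKernel, norm_sub_rev]

theorem integrable_exp_mul_gaussKernel (hLm : Measurable L) (hM : ∀ y, L y ≤ M) (hη : 0 < η)
    (x : EuclideanSpace ℝ (Fin d)) : Integrable (fun z => rexp (L z) * gaussKernel η x z) :=
  integrable_mul_gaussKernel_of_bounded hLm.exp.aestronglyMeasurable
    (fun z => (norm_of_nonneg (exp_pos _).le).trans_le (exp_le_exp.2 (hM z))) hη x

theorem qEta_pos (hLm : Measurable L) (hM : ∀ y, L y ≤ M) (hη : 0 < η)
    (x : EuclideanSpace ℝ (Fin d)) : 0 < qEta L η x := by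
  have hint := integrable_exp_mul_gaussKernel hLm hM hη x
  rw [qEta_eq]
  simp_rw [mul_comm (rexp _)] at hint ⊢
  refine integral_mul_pos_of_pos (fun z => (gaussKernel_pos x z).le) (integrable_gaussKernel hη x)
    ?_ (fun z => exp_pos _) hint
  rw [integral_gaussKernel_eq]
  exact integral_gaussKernel_pos hη

theorem qEta_le (hLm : Measurable L) (hM : ∀ y, L y ≤ M) (hη : 0 < η)
    (x : EuclideanSpace ℝ (Fin d)) :
    qEta L η x ≤ rexp M * ∫ z, gaussKernel η (0 : EuclideanSpace ℝ (Fin d)) z := by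
  rw [qEta_eq, ← integral_gaussKernel_eq x, ← integral_const_mul]
  exact integral_mono (integrable_exp_mul_gaussKernel hLm hM hη x)
    ((integrable_gaussKernel hη x).const_mul _)
    fun z => mul_le_mul_of_nonneg_right (exp_le_exp.2 (hM z)) (gaussKernel_pos x z).le

theorem pEta_pos (hp0 : ∀ x, 0 ≤ p x) (hp1 : ∫ x, p x = 1) (z : EuclideanSpace ℝ (Fin d)) :
    0 < pEta p η z :=
  integral_mul_pos_of_pos hp0 (.of_integral_ne_zero (by simp [hp1])) (by simp [hp1])
    (gaussKernel_pos z) (integrable_mul_gaussKernel (.of_integral_ne_zero (by simp [hp1])) z)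

theorem measurable_KDDS (hpm : Measurable p) : Measurable (Function.uncurry (KDDS p η)) := by
  have hpη : Measurable (pEta p η) := measurable_integral_mul_gaussKernel hpm
  unfold KDDS
  fun_prop

theorem integrable_mul_qEta (hp1 : ∫ x, p x = 1) (hLm : Measurable L) (hM : ∀ y, L y ≤ M)
    (hη : 0 < η) : Integrable (fun x => p x * qEta L η x) :=
  Integrable.mul_bdd (.of_integral_ne_zero (by simp [hp1]))
    (measurable_integral_mul_gaussKernel hLm.exp).aestronglyMeasurable
    (.of_forall fun x => by
      rw [norm_of_nonneg (qEta_pos hLm hM hη x).le]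
      exact qEta_le hLm hM hη x)

theorem integral_mul_qEta_pos (hp0 : ∀ x, 0 ≤ p x) (hp1 : ∫ x, p x = 1) (hLm : Measurable L)
    (hM : ∀ y, L y ≤ M) (hη : 0 < η) : 0 < ∫ x, p x * qEta L η x :=
  integral_mul_pos_of_pos hp0 (.of_integral_ne_zero (by simp [hp1])) (by simp [hp1])
    (qEta_pos hLm hM hη) (integrable_mul_qEta hp1 hLm hM hη)

theorem integral_piEta (hZ : ∫ x, p x * qEta L η x ≠ 0) : ∫ x, piEta p L η x = 1 := by
  simp_rw [piEta, integral_div]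
  exact div_self hZ

theorem piEta_mul_KPCS {x : EuclideanSpace ℝ (Fin d)} (hq : qEta L η x ≠ 0)
    (z : EuclideanSpace ℝ (Fin d)) :
    piEta p L η x * KPCS L η x z
      = p x * rexp (L z) * gaussKernel η x z / ∫ y, p y * qEta L η y := by
  rw [piEta, KPCS_eq]
  field_simp

theorem piEta_mul_KDPnP_comm (hq : ∀ x, qEta L η x ≠ 0) (x x' : EuclideanSpace ℝ (Fin d)) :
    piEta p L η x * KDPnP p L η x x' = piEta p L η x' * KDPnP p L η x' x := by
  simp only [KDPnP, ← integral_const_mul]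
  congr 1 with z
  rw [← mul_assoc, ← mul_assoc, piEta_mul_KPCS (hq x), piEta_mul_KPCS (hq x'), KDDS_eq, KDDS_eq,
    gaussKernel_comm x z, gaussKernel_comm x' z]
  ring

theorem KDDS_nonneg (hp0 : ∀ x, 0 ≤ p x) (hp1 : ∫ x, p x = 1) (z x : EuclideanSpace ℝ (Fin d)) :
    0 ≤ KDDS p η z x := by
  rw [KDDS_eq]
  exact div_nonneg (mul_nonneg (hp0 x) (gaussKernel_pos z x).le) (pEta_pos hp0 hp1 z).le

theorem integrable_KDDS (hp1 : ∫ x, p x = 1) (z : EuclideanSpace ℝ (Fin d)) :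
    Integrable (KDDS p η z) := by
  simp_rw [funext (KDDS_eq z)]
  exact (integrable_mul_gaussKernel (.of_integral_ne_zero (by simp [hp1])) z).div_const _

theorem integral_KDDS (hp0 : ∀ x, 0 ≤ p x) (hp1 : ∫ x, p x = 1) (z : EuclideanSpace ℝ (Fin d)) :
    ∫ x, KDDS p η z x = 1 := by
  simp_rw [KDDS_eq, integral_div]
  exact div_self (pEta_pos hp0 hp1 z).ne'

theorem integrable_KPCS (hLm : Measurable L) (hM : ∀ y, L y ≤ M) (hη : 0 < η)
    (x : EuclideanSpace ℝ (Fin d)) : Integrable (KPCS L η x) := by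
  simp_rw [funext (KPCS_eq x)]
  exact (integrable_exp_mul_gaussKernel hLm hM hη x).div_const _

theorem integral_KPCS (hLm : Measurable L) (hM : ∀ y, L y ≤ M) (hη : 0 < η)
    (x : EuclideanSpace ℝ (Fin d)) : ∫ z, KPCS L η x z = 1 := by
  simp_rw [KPCS_eq, integral_div]
  exact div_self (qEta_pos hLm hM hη x).ne'

theorem integral_KDPnP (hpm : Measurable p) (hp0 : ∀ x, 0 ≤ p x) (hp1 : ∫ x, p x = 1)
    (hLm : Measurable L) (hM : ∀ y, L y ≤ M) (hη : 0 < η) (x : EuclideanSpace ℝ (Fin d)) :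
    ∫ x', KDPnP p L η x x' = 1 := by
  unfold KDPnP
  rw [integral_integral_mul_eq_integral (integrable_KPCS hLm hM hη x)
    (measurable_KDDS hpm).aestronglyMeasurable (KDDS_nonneg hp0 hp1) (integrable_KDDS hp1)
    (integral_KDDS hp0 hp1), integral_KPCS hLm hM hη x]

end DPnPKernels

end DPnP

/-- `π_η(x) = p⋆(x) q̃_η(x) / ∫ p⋆ q̃_η` is a well-defined probability density (the normalizing
integral is finite and positive), `K_DPnP` is reversible with respect to `π_η`, and consequently
`π_η` is a stationary distribution of `K_DPnP`. -/
theorem stmt6 {d : ℕ} (p L : EuclideanSpace ℝ (Fin d) → ℝ)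
    (hpm : Measurable p) (hp0 : ∀ x, 0 ≤ p x) (hp1 : ∫ x, p x = 1)
    (hLm : Measurable L) (hLb : BddAbove (Set.range L))
    (η : ℝ) (hη : 0 < η) :
    Integrable (fun x => p x * qEta L η x)
      ∧ (0 < ∫ x, p x * qEta L η x)
      ∧ (∫ x, piEta p L η x = 1)
      ∧ (∀ x x', piEta p L η x * KDPnP p L η x x' = piEta p L η x' * KDPnP p L η x' x)
      ∧ (∀ x', ∫ x, piEta p L η x * KDPnP p L η x x' = piEta p L η x') := by
  open DPnP in
  obtain ⟨M, hM_ub⟩ := hLb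
  have hLM : ∀ y, L y ≤ M := fun y => hM_ub ⟨y, rfl⟩
  have hZ := integral_mul_qEta_pos hp0 hp1 hLm hLM hη
  have hrev := piEta_mul_KDPnP_comm (p := p) fun x => (qEta_pos hLm hLM hη x).ne'
  exact ⟨integrable_mul_qEta hp1 hLm hLM hη, hZ, integral_piEta hZ.ne', hrev,
    fun x' => integral_mul_eq_of_detailed_balance hrev x' (integral_KDPnP hpm hp0 hp1 hLm hLM hη x')⟩
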